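/- arXiv:2004.05348 — 2 statements merged into one kernel-verified Lean document; each statement's English description precedes it below -/
import Mathlib

section
/- (Theorem 1, Section III) Let L ≥ 1, let α ∈ [0,1], and let w_k ≥ 0, w̃_k ≥ 0 for −(L−1) ≤ k ≤ L−1. Define the Hermitian matrix J = α·Σ_k w_k vec(A_k) vec(A_k)^H + (1−α)·Σ_k w̃_k vec(B_k) vec(B_k)^H. Then the largest eigenvalue of J equals max over k ∈ {−(L−1),…,L−1} of max( λ_A(k), λ_B(k) ), where λ_A(k) = α·w_k·(2L − 2|k|) and λ_B(k) = (1−α)·w̃_k·(L − |k|). -/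
open scoped BigOperators
open Matrix

/-- The `L × L` shift (Toeplitz) matrix `U_k` with `(U_k)_{i,j} = 1` if `j - i = k`. -/
def shiftU (L : ℕ) (k : ℤ) : Matrix (Fin L) (Fin L) ℂ :=
  Matrix.of fun i j => if (j : ℤ) - (i : ℤ) = k then 1 else 0

/-- The `2L × 2L` block-diagonal matrix `A_k = diag(U_k, U_k)`. -/
def AMat (L : ℕ) (k : ℤ) : Matrix (Fin L ⊕ Fin L) (Fin L ⊕ Fin L) ℂ :=
  Matrix.fromBlocks (shiftU L k) 0 0 (shiftU L k)

/-- The `2L × 2L` block matrix `B_k = [[0, U_k], [0, 0]]`. -/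
def BMat (L : ℕ) (k : ℤ) : Matrix (Fin L ⊕ Fin L) (Fin L ⊕ Fin L) ℂ :=
  Matrix.fromBlocks 0 (shiftU L k) 0 0

/-- Vectorization of a square matrix. -/
def vecM {n : Type*} (M : Matrix n n ℂ) : n × n → ℂ := fun p => M p.1 p.2

/-- `J = α Σ_i w_i vec(A_i) vec(A_i)^H + (1-α) Σ_i w̃_i vec(B_i) vec(B_i)^H`. -/
noncomputable def JMat (L : ℕ) (α : ℝ) (w wt : ℤ → ℝ) :
    Matrix ((Fin L ⊕ Fin L) × (Fin L ⊕ Fin L)) ((Fin L ⊕ Fin L) × (Fin L ⊕ Fin L)) ℂ :=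
  (α : ℂ) • ∑ k ∈ Finset.Icc (-(L : ℤ) + 1) ((L : ℤ) - 1),
      (w k : ℂ) • Matrix.vecMulVec (vecM (AMat L k)) (star (vecM (AMat L k)))
  + ((1 - α : ℝ) : ℂ) • ∑ k ∈ Finset.Icc (-(L : ℤ) + 1) ((L : ℤ) - 1),
      (wt k : ℂ) • Matrix.vecMulVec (vecM (BMat L k)) (star (vecM (BMat L k)))

/-! The vectors `vec(A_k)`, `vec(B_k)` have pairwise disjoint supports, hence are pairwise
orthogonal, so `J = ∑ⱼ cⱼ vⱼ vⱼᴴ` maps each `vⱼ` to `cⱼ ‖vⱼ‖² vⱼ`. Conversely, if `J x = μ x` with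
`x ≠ 0` and `μ ≠ 0`, pairing with the `vⱼ` shows that `⟨vⱼ, x⟩ = 0` unless `μ = cⱼ ‖vⱼ‖²`; since
`J x` is a combination of the `vⱼ`, some `⟨vⱼ, x⟩` is nonzero. So the eigenvalues of `J` are the
numbers `cⱼ ‖vⱼ‖² = λ_A(k), λ_B(k)` and possibly `0`, which is dominated by `λ_A(k) ≥ 0`. -/

section RankOneSum

variable {K n ι : Type*} [Field K] [Fintype n] {s : Finset ι} {c : ι → K} {u v : ι → n → K}

theorem Matrix.sum_smul_vecMulVec_mulVec (x : n → K) :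
    (∑ j ∈ s, c j • vecMulVec (v j) (u j)) *ᵥ x = ∑ j ∈ s, (c j * (u j ⬝ᵥ x)) • v j := by
  simp only [sum_mulVec, smul_mulVec, vecMulVec_mulVec, op_smul_eq_smul, smul_smul]

theorem Matrix.sum_smul_vecMulVec_mulVec_of_pairwise
    (huv : (s : Set ι).Pairwise fun i j => u i ⬝ᵥ v j = 0) {i : ι} (hi : i ∈ s) :
    (∑ j ∈ s, c j • vecMulVec (v j) (u j)) *ᵥ v i = (c i * (u i ⬝ᵥ v i)) • v i := by
  rw [sum_smul_vecMulVec_mulVec, Finset.sum_eq_single_of_mem i hi]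
  intro j hj hji
  rw [huv hj hi hji, mul_zero, zero_smul]

theorem Matrix.eq_zero_or_exists_of_sum_smul_vecMulVec_mulVec_eq_smul
    (huv : (s : Set ι).Pairwise fun i j => u i ⬝ᵥ v j = 0) {x : n → K} (hx : x ≠ 0) {μ : K}
    (h : (∑ j ∈ s, c j • vecMulVec (v j) (u j)) *ᵥ x = μ • x) :
    μ = 0 ∨ ∃ i ∈ s, μ = c i * (u i ⬝ᵥ v i) := by
  by_contra! hμ
  obtain ⟨hμ0, hμc⟩ := hμ
  have hux : ∀ i ∈ s, u i ⬝ᵥ x = 0 := by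
    intro i hi
    have := congrArg (u i ⬝ᵥ ·) h
    simp only [sum_smul_vecMulVec_mulVec, dotProduct_sum, dotProduct_smul, smul_eq_mul] at this
    rw [Finset.sum_eq_single_of_mem i hi fun j hj hji => by rw [huv hi hj hji.symm, mul_zero]]
      at this
    have : (μ - c i * (u i ⬝ᵥ v i)) * (u i ⬝ᵥ x) = 0 := by linear_combination -this
    exact (mul_eq_zero.1 this).resolve_left (sub_ne_zero.2 (hμc i hi))
  rw [sum_smul_vecMulVec_mulVec, Finset.sum_eq_zero fun i hi => by rw [hux i hi, mul_zero,
    zero_smul]] at h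
  exact hx ((smul_eq_zero.1 h.symm).resolve_left hμ0)

end RankOneSum

theorem Matrix.IsHermitian.mem_range_eigenvalues_iff {𝕜 n : Type*} [RCLike 𝕜] [Fintype n]
    [DecidableEq n] {A : Matrix n n 𝕜} (hA : A.IsHermitian) (μ : ℝ) :
    μ ∈ Set.range hA.eigenvalues ↔ ∃ x ≠ 0, A *ᵥ x = (μ : 𝕜) • x := by
  rw [← hA.spectrum_real_eq_range_eigenvalues, ← spectrum.algebraMap_mem_iff 𝕜,
    ← Matrix.spectrum_toLin', ← Module.End.hasEigenvalue_iff_mem_spectrum,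
    Module.End.hasEigenvalue_iff, Submodule.ne_bot_iff]
  simp [and_comm]

open Finset in
theorem card_filter_sub_eq (L : ℕ) (k : ℤ) :
    #{p : Fin L × Fin L | (p.2 : ℤ) - p.1 = k} = L - k.natAbs := by
  rw [← card_range (L - k.natAbs)]
  refine card_bij' (fun p _ => min (p.1 : ℕ) p.2)
    (fun m hm => (⟨m + (-k).toNat, by grind⟩, ⟨m + k.toNat, by grind⟩)) ?_ ?_ ?_ ?_
  · rintro ⟨⟨a, ha⟩, ⟨b, hb⟩⟩ hp
    simp only [mem_filter, mem_univ, true_and, mem_range] at hp ⊢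
    omega
  · intro m hm
    simp only [mem_filter, mem_univ, true_and, mem_range] at hm ⊢
    omega
  · rintro ⟨⟨a, ha⟩, ⟨b, hb⟩⟩ hp
    simp only [mem_filter, mem_univ, true_and] at hp
    simp only [Prod.ext_iff, Fin.ext_iff]
    omega
  · intro m hm
    simp only [mem_range] at hm ⊢
    omega

theorem trace_conjTranspose_shiftU_mul_shiftU (L : ℕ) (k k' : ℤ) :
    ((shiftU L k)ᴴ * shiftU L k').trace = if k = k' then ((L - k.natAbs : ℕ) : ℂ) else 0 := by
  have htrace : ((shiftU L k)ᴴ * shiftU L k').trace =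
      ∑ p : Fin L × Fin L, if (p.2 : ℤ) - p.1 = k ∧ (p.2 : ℤ) - p.1 = k' then 1 else 0 := by
    rw [Fintype.sum_prod_type, Finset.sum_comm]
    simp [trace, mul_apply, shiftU, ← ite_and, and_comm]
  split_ifs with h
  · subst h
    simp [htrace, Finset.sum_boole, card_filter_sub_eq]
  · exact htrace.trans (Finset.sum_eq_zero fun p _ => if_neg (by omega))

theorem star_vecM_dotProduct_vecM {n : Type*} [Fintype n] (M N : Matrix n n ℂ) :
    star (vecM M) ⬝ᵥ vecM N = (Mᴴ * N).trace := by
  simp only [dotProduct, vecM, Fintype.sum_prod_type, trace, diag, mul_apply, Pi.star_apply,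
    conjTranspose_apply]
  exact Finset.sum_comm

theorem Matrix.trace_fromBlocks {l m R : Type*} [Fintype l] [Fintype m] [AddCommMonoid R]
    (A : Matrix l l R) (B : Matrix l m R) (C : Matrix m l R) (D : Matrix m m R) :
    (fromBlocks A B C D).trace = A.trace + D.trace := by
  simp [trace, Fintype.sum_sum_type]

theorem trace_conjTranspose_AMat_mul_AMat (L : ℕ) (k k' : ℤ) :
    ((AMat L k)ᴴ * AMat L k').trace = 2 * ((shiftU L k)ᴴ * shiftU L k').trace := by
  simp [AMat, fromBlocks_conjTranspose, fromBlocks_multiply, trace_fromBlocks, two_mul]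

theorem trace_conjTranspose_BMat_mul_BMat (L : ℕ) (k k' : ℤ) :
    ((BMat L k)ᴴ * BMat L k').trace = ((shiftU L k)ᴴ * shiftU L k').trace := by
  simp [BMat, fromBlocks_conjTranspose, fromBlocks_multiply, trace_fromBlocks]

theorem trace_conjTranspose_AMat_mul_BMat (L : ℕ) (k k' : ℤ) :
    ((AMat L k)ᴴ * BMat L k').trace = 0 := by
  simp [AMat, BMat, fromBlocks_conjTranspose, fromBlocks_multiply, trace_fromBlocks]

theorem trace_conjTranspose_BMat_mul_AMat (L : ℕ) (k k' : ℤ) :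
    ((BMat L k)ᴴ * AMat L k').trace = 0 := by
  simp [AMat, BMat, fromBlocks_conjTranspose, fromBlocks_multiply, trace_fromBlocks]

noncomputable def abIndex (L : ℕ) : Finset (ℤ ⊕ ℤ) :=
  (Finset.Icc (-(L : ℤ) + 1) ((L : ℤ) - 1)).disjSum (Finset.Icc (-(L : ℤ) + 1) ((L : ℤ) - 1))

def abMat (L : ℕ) : ℤ ⊕ ℤ → Matrix (Fin L ⊕ Fin L) (Fin L ⊕ Fin L) ℂ :=
  Sum.elim (AMat L) (BMat L)

def abWeight (α : ℝ) (w wt : ℤ → ℝ) : ℤ ⊕ ℤ → ℝ :=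
  Sum.elim (fun k => α * w k) (fun k => (1 - α) * wt k)

def abEigenvalue (L : ℕ) (α : ℝ) (w wt : ℤ → ℝ) : ℤ ⊕ ℤ → ℝ :=
  Sum.elim (fun k => α * w k * (2 * (L : ℝ) - 2 * (k.natAbs : ℝ)))
    (fun k => (1 - α) * wt k * ((L : ℝ) - (k.natAbs : ℝ)))

theorem JMat_eq_sum (L : ℕ) (α : ℝ) (w wt : ℤ → ℝ) :
    JMat L α w wt = ∑ j ∈ abIndex L,
      (abWeight α w wt j : ℂ) • vecMulVec (vecM (abMat L j)) (star (vecM (abMat L j))) := by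
  simp only [JMat, abIndex, Finset.sum_disjSum, abWeight, abMat, Sum.elim_inl, Sum.elim_inr,
    Finset.smul_sum, smul_smul, Complex.ofReal_mul]

theorem pairwise_star_vecM_abMat_dotProduct (L : ℕ) :
    Pairwise fun i j => star (vecM (abMat L i)) ⬝ᵥ vecM (abMat L j) = 0 := by
  rintro (k | k) (k' | k') h <;>
    simp_all [abMat, star_vecM_dotProduct_vecM, trace_conjTranspose_AMat_mul_AMat,
      trace_conjTranspose_BMat_mul_BMat, trace_conjTranspose_AMat_mul_BMat,
      trace_conjTranspose_BMat_mul_AMat, trace_conjTranspose_shiftU_mul_shiftU]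

theorem abWeight_mul_star_vecM_abMat_dotProduct (L : ℕ) (α : ℝ) (w wt : ℤ → ℝ) {j : ℤ ⊕ ℤ}
    (hj : j ∈ abIndex L) :
    (abWeight α w wt j : ℂ) * (star (vecM (abMat L j)) ⬝ᵥ vecM (abMat L j))
      = abEigenvalue L α w wt j := by
  rcases j with k | k <;>
  · simp only [abIndex, Finset.inl_mem_disjSum, Finset.inr_mem_disjSum, Finset.mem_Icc] at hj
    simp only [abWeight, abMat, abEigenvalue, Sum.elim_inl, Sum.elim_inr,
      star_vecM_dotProduct_vecM, trace_conjTranspose_AMat_mul_AMat,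
      trace_conjTranspose_BMat_mul_BMat, trace_conjTranspose_shiftU_mul_shiftU, if_pos,
      Nat.cast_sub (show k.natAbs ≤ L by omega)]
    push_cast
    ring

theorem vecM_abMat_ne_zero {L : ℕ} {j : ℤ ⊕ ℤ} (hj : j ∈ abIndex L) : vecM (abMat L j) ≠ 0 := by
  intro h
  have hself := congrArg (star (vecM (abMat L j)) ⬝ᵥ ·) h
  rcases j with k | k <;>
  · simp only [abIndex, Finset.inl_mem_disjSum, Finset.inr_mem_disjSum, Finset.mem_Icc] at hj
    simp [abMat, star_vecM_dotProduct_vecM, trace_conjTranspose_AMat_mul_AMat,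
      trace_conjTranspose_BMat_mul_BMat, trace_conjTranspose_shiftU_mul_shiftU] at hself
    omega

theorem JMat_mulVec_vecM_abMat (L : ℕ) (α : ℝ) (w wt : ℤ → ℝ) {j : ℤ ⊕ ℤ}
    (hj : j ∈ abIndex L) :
    JMat L α w wt *ᵥ vecM (abMat L j) = (abEigenvalue L α w wt j : ℂ) • vecM (abMat L j) := by
  rw [JMat_eq_sum, sum_smul_vecMulVec_mulVec_of_pairwise
    ((pairwise_star_vecM_abMat_dotProduct L).set_pairwise _) hj,
    abWeight_mul_star_vecM_abMat_dotProduct L α w wt hj]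

theorem eq_zero_or_exists_abEigenvalue_of_JMat_mulVec_eq_smul {L : ℕ} {α : ℝ} {w wt : ℤ → ℝ}
    {x : (Fin L ⊕ Fin L) × (Fin L ⊕ Fin L) → ℂ} (hx : x ≠ 0) {μ : ℝ}
    (h : JMat L α w wt *ᵥ x = (μ : ℂ) • x) :
    μ = 0 ∨ ∃ j ∈ abIndex L, μ = abEigenvalue L α w wt j := by
  rw [JMat_eq_sum] at h
  rcases eq_zero_or_exists_of_sum_smul_vecMulVec_mulVec_eq_smul
    ((pairwise_star_vecM_abMat_dotProduct L).set_pairwise _) hx h with h0 | ⟨j, hj, hμ⟩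
  · exact Or.inl (mod_cast h0)
  · rw [abWeight_mul_star_vecM_abMat_dotProduct L α w wt hj] at hμ
    exact Or.inr ⟨j, hj, mod_cast hμ⟩

theorem stmt7_general (L : ℕ) (α : ℝ) (hα0 : 0 ≤ α)
    (w wt : ℤ → ℝ) (hw : ∀ k, 0 ≤ w k)
    (hJ : (JMat L α w wt).IsHermitian)
    (hne : (Finset.Icc (-(L : ℤ) + 1) ((L : ℤ) - 1)).Nonempty) :
    (⨆ i, hJ.eigenvalues i)
      = (Finset.Icc (-(L : ℤ) + 1) ((L : ℤ) - 1)).sup' hne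
          (fun k => max (α * w k * (2 * (L : ℝ) - 2 * (k.natAbs : ℝ)))
            ((1 - α) * wt k * ((L : ℝ) - (k.natAbs : ℝ)))) := by
  set m := (Finset.Icc (-(L : ℤ) + 1) ((L : ℤ) - 1)).sup' hne
    fun k => max (abEigenvalue L α w wt (.inl k)) (abEigenvalue L α w wt (.inr k))
  have le_m : ∀ j ∈ abIndex L, abEigenvalue L α w wt j ≤ m := by
    rintro (k | k) hk
    · exact Finset.le_sup'_of_le _ (Finset.inl_mem_disjSum.1 hk) (le_max_left _ _)
    · exact Finset.le_sup'_of_le _ (Finset.inr_mem_disjSum.1 hk) (le_max_right _ _)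
  have le_iSup : ∀ j ∈ abIndex L, abEigenvalue L α w wt j ≤ ⨆ i, hJ.eigenvalues i := by
    intro j hj
    obtain ⟨i, hi⟩ := (hJ.mem_range_eigenvalues_iff (abEigenvalue L α w wt j)).2
      ⟨_, vecM_abMat_ne_zero hj, JMat_mulVec_vecM_abMat L α w wt hj⟩
    exact hi ▸ le_ciSup (Set.finite_range _).bddAbove i
  have m_nonneg : 0 ≤ m := by
    obtain ⟨k, hk⟩ := id hne
    have : (k.natAbs : ℝ) < L := mod_cast (by have := Finset.mem_Icc.1 hk; omega)
    exact (mul_nonneg (mul_nonneg hα0 (hw k)) (by linarith)).trans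
      (le_m (.inl k) (Finset.inl_mem_disjSum.2 hk))
  refine le_antisymm (Real.iSup_le (fun i => ?_) m_nonneg)
    (Finset.sup'_le _ _ fun k hk => max_le (le_iSup _ (Finset.inl_mem_disjSum.2 hk))
      (le_iSup _ (Finset.inr_mem_disjSum.2 hk)))
  obtain ⟨x, hx, hJx⟩ := (hJ.mem_range_eigenvalues_iff (hJ.eigenvalues i)).1 ⟨i, rfl⟩
  rcases eq_zero_or_exists_abEigenvalue_of_JMat_mulVec_eq_smul (μ := hJ.eigenvalues i) hx hJx
    with h0 | ⟨j, hj, hμ⟩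
  · exact h0 ▸ m_nonneg
  · exact hμ ▸ le_m j hj

/-- (Theorem 1, Section III) For `α ∈ [0,1]` and nonnegative weights, the largest
eigenvalue of the Hermitian matrix `J` equals
`max_{k ∈ {-(L-1),…,L-1}} max(λ_A(k), λ_B(k))` where `λ_A(k) = α w_k (2L - 2|k|)` and
`λ_B(k) = (1-α) w̃_k (L - |k|)`. -/
theorem stmt7 (L : ℕ) (hL : 1 ≤ L) (α : ℝ) (hα0 : 0 ≤ α) (hα1 : α ≤ 1)
    (w wt : ℤ → ℝ) (hw : ∀ k, 0 ≤ w k) (hwt : ∀ k, 0 ≤ wt k)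
    (hJ : (JMat L α w wt).IsHermitian)
    (hne : (Finset.Icc (-(L : ℤ) + 1) ((L : ℤ) - 1)).Nonempty) :
    (⨆ i, hJ.eigenvalues i)
      = (Finset.Icc (-(L : ℤ) + 1) ((L : ℤ) - 1)).sup' hne
          (fun k => max (α * w k * (2 * (L : ℝ) - 2 * (k.natAbs : ℝ)))
            ((1 - α) * wt k * ((L : ℝ) - (k.natAbs : ℝ)))) :=
  stmt7_general L α hα0 w wt hw hJ hne
end

section
/- (Co-channel Taylor coefficients CV_m, equation (55)) Let (a_n) be the Prouhet–Thue–Morse sequence, M ≥ 0, N = 2^{M+1}, and β_m = Σ_{n=0}^{N−1} a_n·n^m. For complex numbers X, Y define S_{V,n} as follows: if n is even, S_{V,n} = (1−a_n)·X + a_n·(−conj(Y)); if n is odd, S_{V,n} = a_n·(−conj(Y)) + (1−a_n)·(−X). Then |S_{V,n}|² = (1−a_n)·|X|² + a_n·|Y|² for every n, and for every 0 ≤ m ≤ M, Σ_{n=0}^{N−1} n^m·|S_{V,n}|² = β_m·( |X|² + |Y|² ). -/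
/-!
Replacing `a n ∈ {0, 1}` by the sign `c n = 1 - 2 a n` turns the recursion into
`c (2k) = c k`, `c (2k+1) = -c k`. Pairing `2k` with `2k+1`, the binomial theorem reduces
`Σ_{n < 2^(M+2)} c n n^m` to combinations of `Σ_{k < 2^(M+1)} c k k^j` with `j < m`, so these
moments vanish for `m ≤ M` (Prouhet–Tarry–Escott). Hence the zeros and the ones of the
Thue–Morse word below `2^(M+1)` have equal `m`-th moments, and since `|S_{V,n}|²` is `|X|²`
at the zeros and `|Y|²` at the ones, both weighted sums equal `β_m`.
-/

open Finset

theorem Finset.sum_range_two_mul {M : Type*} [AddCommMonoid M] (f : ℕ → M) (N : ℕ) :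
    ∑ n ∈ range (2 * N), f n = ∑ k ∈ range N, (f (2 * k) + f (2 * k + 1)) := by
  induction N with
  | zero => simp
  | succ N ih =>
    rw [show 2 * (N + 1) = 2 * N + 1 + 1 by ring, sum_range_succ, sum_range_succ, ih,
      sum_range_succ, add_assoc]

theorem sum_range_two_pow_mul_pow_eq_zero {R : Type*} [CommRing R] {c : ℕ → R}
    (hce : ∀ k, c (2 * k) = c k) (hco : ∀ k, c (2 * k + 1) = -c k) :
    ∀ M, ∀ m ≤ M, ∑ n ∈ range (2 ^ (M + 1)), c n * (n : R) ^ m = 0 := by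
  intro M
  induction M with
  | zero =>
    intro m hm
    simp [Nat.le_zero.mp hm, sum_range_succ, hco 0]
  | succ M ih =>
    intro m hm
    have hpair : ∀ k : ℕ,
        c (2 * k) * ((2 * k : ℕ) : R) ^ m + c (2 * k + 1) * ((2 * k + 1 : ℕ) : R) ^ m
          = -∑ j ∈ range m, (2 : R) ^ j * m.choose j * (c k * (k : R) ^ j) := by
      intro k
      have hterms : c k * ∑ j ∈ range m, (2 * (k : R)) ^ j * m.choose j
          = ∑ j ∈ range m, (2 : R) ^ j * m.choose j * (c k * (k : R) ^ j) := by
        rw [mul_sum]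
        refine sum_congr rfl fun j _ => ?_
        rw [mul_pow]; ring
      rw [hce, hco]
      push_cast
      rw [add_pow, sum_range_succ]
      simp only [one_pow, mul_one, Nat.choose_self, Nat.cast_one]
      linear_combination -hterms
    rw [pow_succ', sum_range_two_mul, sum_congr rfl fun k _ => hpair k, sum_neg_distrib,
      sum_comm, neg_eq_zero]
    refine sum_eq_zero fun j hj => ?_
    rw [← mul_sum, ih j (by simp only [mem_range] at hj; omega), mul_zero]

section ThueMorse

variable {a : ℕ → ℕ} (ha0 : a 0 = 0) (hae : ∀ k, a (2 * k) = a k)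
  (hao : ∀ k, a (2 * k + 1) = 1 - a k)
include ha0 hae hao

theorem le_one_of_thueMorse (n : ℕ) : a n ≤ 1 := by
  induction n using Nat.strong_induction_on with
  | _ n ih =>
    obtain ⟨k, rfl | rfl⟩ := Nat.even_or_odd' n
    · rcases Nat.eq_zero_or_pos k with rfl | hk
      · simp [ha0]
      · rw [hae]; exact ih k (by omega)
    · rw [hao]; omega

theorem sum_range_two_pow_one_sub_mul_pow {M m : ℕ} (hm : m ≤ M) :
    ∑ n ∈ range (2 ^ (M + 1)), (1 - (a n : ℝ)) * (n : ℝ) ^ m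
      = ∑ n ∈ range (2 ^ (M + 1)), (a n : ℝ) * (n : ℝ) ^ m := by
  have hco : ∀ k, 1 - 2 * (a (2 * k + 1) : ℝ) = -(1 - 2 * (a k : ℝ)) := fun k => by
    rw [hao, Nat.cast_sub (le_one_of_thueMorse ha0 hae hao k)]
    push_cast
    ring
  have hsigned := sum_range_two_pow_mul_pow_eq_zero (c := fun n => 1 - 2 * (a n : ℝ))
    (fun k => by simp only [hae]) hco M m hm
  rw [← sub_eq_zero, ← sum_sub_distrib, ← hsigned]
  refine sum_congr rfl fun n _ => ?_
  ring

end ThueMorse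

theorem norm_sq_one_sub_mul_add_mul {t : ℕ} (ht : t ≤ 1) (u v : ℂ) :
    ‖(1 - (t : ℂ)) * u + t * v‖ ^ 2 = (1 - (t : ℝ)) * ‖u‖ ^ 2 + t * ‖v‖ ^ 2 := by
  interval_cases t <;> simp

/-- (Co-channel Taylor coefficients `CV_m`, equation (55)) With `(a_n)` the PTM
sequence, `N = 2^{M+1}`, `β_m = Σ_{n<N} a_n n^m`, and `S_{V,n}` the pointwise evaluation
of the first row of the PTM-A transmit matrix (split by parity of `n`):
`|S_{V,n}|² = (1 - a_n)|X|² + a_n|Y|²` for every `n`, and for every `0 ≤ m ≤ M`,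
`Σ_{n<N} n^m |S_{V,n}|² = β_m (|X|² + |Y|²)`. -/
theorem stmt18 (M : ℕ) (a : ℕ → ℕ) (ha0 : a 0 = 0)
    (hae : ∀ k, a (2 * k) = a k) (hao : ∀ k, a (2 * k + 1) = 1 - a k)
    (X Y : ℂ) (SV : ℕ → ℂ)
    (hSVe : ∀ n, n % 2 = 0 →
      SV n = (1 - (a n : ℂ)) * X + (a n : ℂ) * (-(starRingEnd ℂ) Y))
    (hSVo : ∀ n, n % 2 = 1 →
      SV n = (a n : ℂ) * (-(starRingEnd ℂ) Y) + (1 - (a n : ℂ)) * (-X)) :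
    (∀ n, ‖SV n‖ ^ 2
      = (1 - (a n : ℝ)) * ‖X‖ ^ 2 + (a n : ℝ) * ‖Y‖ ^ 2) ∧
    (∀ m ≤ M,
      ∑ n ∈ Finset.range (2 ^ (M + 1)), (n : ℝ) ^ m * ‖SV n‖ ^ 2
        = ((∑ n ∈ Finset.range (2 ^ (M + 1)), a n * n ^ m : ℕ) : ℝ)
            * (‖X‖ ^ 2 + ‖Y‖ ^ 2)) := by
  have hnorm : ∀ n, ‖SV n‖ ^ 2 = (1 - (a n : ℝ)) * ‖X‖ ^ 2 + (a n : ℝ) * ‖Y‖ ^ 2 := by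
    intro n
    have hn := le_one_of_thueMorse ha0 hae hao n
    rcases Nat.mod_two_eq_zero_or_one n with h | h
    · rw [hSVe n h, norm_sq_one_sub_mul_add_mul hn, norm_neg, Complex.norm_conj]
    · rw [hSVo n h, add_comm, norm_sq_one_sub_mul_add_mul hn, norm_neg, norm_neg,
        Complex.norm_conj]
  refine ⟨hnorm, fun m hm => ?_⟩
  calc ∑ n ∈ range (2 ^ (M + 1)), (n : ℝ) ^ m * ‖SV n‖ ^ 2
      = (∑ n ∈ range (2 ^ (M + 1)), (1 - (a n : ℝ)) * (n : ℝ) ^ m) * ‖X‖ ^ 2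
        + (∑ n ∈ range (2 ^ (M + 1)), (a n : ℝ) * (n : ℝ) ^ m) * ‖Y‖ ^ 2 := by
        rw [sum_mul, sum_mul, ← sum_add_distrib]
        refine sum_congr rfl fun n _ => ?_
        rw [hnorm]; ring
    _ = _ := by
        rw [sum_range_two_pow_one_sub_mul_pow ha0 hae hao hm]
        push_cast
        ring
end
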